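/- arXiv:2410.20089 — 3 statements merged into one kernel-verified Lean document; each statement's English description precedes it below -/
import Mathlib

section
/- For integers n ≥ 2 and k with 1 ≤ k < n/2, there exists an (n,k)-separating system S on [n] with |S| ≤ ⌈n/k⌉ · ⌈log_{⌈n/k⌉} n⌉. -/
open Finset

/-- `S` is an `(n,k)`-separating system on `Fin n`: every member has size at most `k`
and every pair of distinct elements is separated by some member. -/
def IsSeparatingSystem (n k : ℕ) (S : Finset (Finset (Fin n))) : Prop :=
  (∀ s ∈ S, s.card ≤ k) ∧
  ∀ i j : Fin n, i ≠ j → ∃ s ∈ S, (i ∈ s ∧ j ∉ s) ∨ (i ∉ s ∧ j ∈ s)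

/-!
With `q = ⌈n / k⌉` and `m = clog q n`, code every `i < n` injectively by a word of length `m`
over `q` letters in which each letter occurs at most `k` times in each position. The sets
"the `a`-th letter is `b`" then have at most `k` elements, number at most `q m`, and separate
any two elements because their words differ in some position.
-/

section CoordinateFibers

variable {α ι β : Type*} [Fintype α] [DecidableEq α] [Fintype ι] [Fintype β] [DecidableEq β]

def coordinateFibers (f : α → ι → β) : Finset (Finset α) :=
  univ.image fun p : ι × β => ({x | f x p.1 = p.2} : Finset α)

theorem card_coordinateFibers_le (f : α → ι → β) :
    #(coordinateFibers f) ≤ Fintype.card ι * Fintype.card β :=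
  card_image_le.trans_eq (by simp)

theorem card_le_of_mem_coordinateFibers {f : α → ι → β} {k : ℕ}
    (hf : ∀ a b, #{x | f x a = b} ≤ k) {s : Finset α} (hs : s ∈ coordinateFibers f) :
    #s ≤ k := by
  obtain ⟨⟨a, b⟩, -, rfl⟩ := mem_image.1 hs
  exact hf a b

theorem exists_mem_coordinateFibers_separating {f : α → ι → β} (hf : f.Injective)
    {x y : α} (hxy : x ≠ y) : ∃ s ∈ coordinateFibers f, x ∈ s ∧ y ∉ s := by
  obtain ⟨a, ha⟩ := Function.ne_iff.1 (hf.ne hxy)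
  exact ⟨({z | f z a = f x a} : Finset α), mem_image_of_mem _ (mem_univ (a, f x a)), by simp,
    by simpa using Ne.symm ha⟩

end CoordinateFibers

theorem isSeparatingSystem_coordinateFibers {ι β : Type*} [Fintype ι] [Fintype β]
    [DecidableEq β] {n k : ℕ} {f : Fin n → ι → β} (hf : f.Injective)
    (hfib : ∀ a b, #{x | f x a = b} ≤ k) : IsSeparatingSystem n k (coordinateFibers f) :=
  ⟨fun _ => card_le_of_mem_coordinateFibers hfib,
    fun _ _ hij => (exists_mem_coordinateFibers_separating hf hij).imp fun _ ⟨hs, h⟩ => ⟨hs, .inl h⟩⟩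

namespace Nat

theorem eq_of_div_pow_mod_eq {q x y : ℕ} :
    ∀ {m : ℕ}, (∀ s < m, x / q ^ s % q = y / q ^ s % q) → x / q ^ m = y / q ^ m → x = y
  | 0, _, h => by simpa using h
  | m + 1, hdig, htop => by
    have hlow : x % q = y % q := by simpa using hdig 0 m.succ_pos
    have hhigh : x / q = y / q := by
      refine eq_of_div_pow_mod_eq (q := q) (m := m) (fun s hs => ?_) ?_
      · simpa [Nat.div_div_eq_div_mul, pow_succ'] using hdig (s + 1) (by omega)
      · simpa [Nat.div_div_eq_div_mul, pow_succ'] using htop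
    rw [← Nat.div_add_mod x q, ← Nat.div_add_mod y q, hlow, hhigh]

/-- The `a`-th letter of `i` is its last base-`q` digit shifted by its digit `a + 1`. Among
the `q` numbers with a given value of `i / q` the shift is the same, so each letter occurs once
there; hence on `[0, n)` every letter occurs at most `⌈n / q⌉` times in each position. -/
def shiftedDigit (q a i : ℕ) : ℕ := (i + i / q ^ (a + 1)) % q

theorem eq_of_shiftedDigit_eq_of_div_eq {q a i j : ℕ} (h : shiftedDigit q a i = shiftedDigit q a j)
    (hdiv : i / q = j / q) : i = j := by
  have htop : i / q ^ (a + 1) = j / q ^ (a + 1) := by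
    rw [pow_succ', ← Nat.div_div_eq_div_mul, ← Nat.div_div_eq_div_mul, hdiv]
  have hlow : i % q = j % q := by
    unfold shiftedDigit at h
    rw [htop] at h
    exact Nat.ModEq.add_right_cancel' _ h
  rw [← Nat.div_add_mod i q, ← Nat.div_add_mod j q, hlow, hdiv]

theorem eq_of_forall_shiftedDigit_eq {q m i j : ℕ} (hi : i < q ^ m) (hj : j < q ^ m)
    (h : ∀ a < m, shiftedDigit q a i = shiftedDigit q a j) : i = j := by
  rcases m with _ | m
  · rw [pow_zero] at hi hj; omega
  have htop : i / q ^ (m + 1) = j / q ^ (m + 1) := by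
    rw [Nat.div_eq_of_lt hi, Nat.div_eq_of_lt hj]
  -- the last letter is the last digit, since `i / q ^ (m + 1) = 0`
  have hlow : i % q = j % q := by
    simpa [shiftedDigit, Nat.div_eq_of_lt hi, Nat.div_eq_of_lt hj] using h m m.lt_succ_self
  refine eq_of_div_pow_mod_eq (m := m + 1) (fun s hs => ?_) htop
  rcases s with _ | s
  · simpa using hlow
  · exact Nat.ModEq.add_left_cancel hlow (h s (by omega))

end Nat

def shiftedCode (n q m : ℕ) [NeZero q] (i : Fin n) (a : Fin m) : Fin q :=
  ⟨Nat.shiftedDigit q a i, Nat.mod_lt _ (NeZero.pos q)⟩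

theorem shiftedCode_injective {n q m : ℕ} [NeZero q] (hn : n ≤ q ^ m) :
    (shiftedCode n q m).Injective := fun i j h =>
  Fin.ext <| Nat.eq_of_forall_shiftedDigit_eq (i.2.trans_le hn) (j.2.trans_le hn)
    fun a ha => congrArg Fin.val (congrFun h ⟨a, ha⟩)

theorem card_filter_shiftedCode_le {n q m k : ℕ} [NeZero q] (hn : n ≤ q * k) (a : Fin m)
    (b : Fin q) : #{i | shiftedCode n q m i a = b} ≤ k := by
  simpa using card_le_card_of_injOn (t := range k) (fun i : Fin n => i / q)
    (fun i _ => mem_range.2 <| (Nat.div_lt_iff_lt_mul (NeZero.pos q)).2 <| by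
      rw [mul_comm]; exact i.2.trans_le hn)
    fun i hi j hj hij => Fin.ext <| Nat.eq_of_shiftedDigit_eq_of_div_eq
      (congrArg Fin.val ((mem_filter.1 hi).2.trans (mem_filter.1 hj).2.symm)) hij

theorem exists_separating_system_general (n k : ℕ) (hk : 1 ≤ k) (hkn : 2 * k < n) :
    ∃ S : Finset (Finset (Fin n)), IsSeparatingSystem n k S ∧
      S.card ≤ ⌈(n : ℝ) / k⌉₊ * Nat.clog ⌈(n : ℝ) / k⌉₊ n := by
  set q := ⌈(n : ℝ) / k⌉₊
  have hk0 : (0 : ℝ) < k := by exact_mod_cast hk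
  have hnq : n ≤ q * k := by
    exact_mod_cast (div_le_iff₀ hk0).1 (Nat.le_ceil ((n : ℝ) / k))
  have hq : 1 < q := by
    refine Nat.lt_ceil.2 ?_
    rw [Nat.cast_one, one_lt_div hk0]
    exact_mod_cast (by omega : k < n)
  have : NeZero q := ⟨by omega⟩
  refine ⟨coordinateFibers (shiftedCode n q (Nat.clog q n)),
    isSeparatingSystem_coordinateFibers (shiftedCode_injective (Nat.le_pow_clog hq n))
      (card_filter_shiftedCode_le hnq), ?_⟩
  simpa [mul_comm] using card_coordinateFibers_le (shiftedCode n q (Nat.clog q n))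

/-- for `n ≥ 2` and `1 ≤ k < n/2`, there is an `(n,k)`-separating system of
size at most `⌈n/k⌉ · ⌈log_{⌈n/k⌉} n⌉`. -/
theorem exists_separating_system (n k : ℕ) (hn : 2 ≤ n) (hk : 1 ≤ k) (hkn : 2 * k < n) :
    ∃ S : Finset (Finset (Fin n)), IsSeparatingSystem n k S ∧
      S.card ≤ ⌈(n : ℝ) / k⌉₊ * Nat.clog ⌈(n : ℝ) / k⌉₊ n :=
  exists_separating_system_general n k hk hkn
end

section
/- For integers a > 1 and n with a^x < n ≤ a^{x+1}, there exists an injective labeling L : [n] → {0,1,...,a}^{x+1} such that for every position d ∈ [x+1] and every letter c ∈ {0,...,a}, the number of elements j ∈ [n] with the d-th letter of L(j) equal to c is at most ⌈n/a⌉. -/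
/-!
Let `q = ⌈n/a⌉`, so that `n ≤ a q` and `q ≤ a^x`. Write `j < n` as `j = q g + r` with `g < a` and
`r < q`, and let `w ∈ {0,…,a-1}^x` be the base-`a` digits of `r`. The label of `j` is the word whose
last letter is `g` and whose `i`-th letter is `w i + g mod a`. The pair `(g, w)`, hence `j`, can be
read off the label. In any fixed position, the letter and `r` together determine `g`, so the `j`
carrying a given letter there have pairwise distinct `r`, and there are at most `q` of them.
-/

open Finset Function

section ShiftWord

variable {G : Type*} [AddGroup G] {x : ℕ}

def shiftWord (g : G) (w : Fin x → G) : Fin (x + 1) → G :=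
  Fin.snoc (fun i => w i + g) g

@[simp]
lemma shiftWord_last (g : G) (w : Fin x → G) : shiftWord g w (Fin.last x) = g :=
  Fin.snoc_last _ _

@[simp]
lemma shiftWord_castSucc (g : G) (w : Fin x → G) (i : Fin x) :
    shiftWord g w i.castSucc = w i + g :=
  Fin.snoc_castSucc _ _ _

lemma shiftWord_injective2 : Injective2 (shiftWord : G → (Fin x → G) → Fin (x + 1) → G) := by
  intro g g' w w' h
  have hg : g = g' := by simpa using congrFun h (Fin.last x)
  subst hg
  exact ⟨rfl, funext fun i => by simpa using congrFun h i.castSucc⟩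

lemma shiftWord_left_injective (w : Fin x → G) (d : Fin (x + 1)) :
    Injective fun g : G => shiftWord g w d := by
  intro g g' h
  induction d using Fin.lastCases with
  | last => simpa using h
  | cast i => simpa using h

end ShiftWord

lemma card_filter_le_card_of_injective_fst {α β G γ : Type*} [Fintype α] [Fintype β]
    [DecidableEq γ] {e : α → G × β} (he : Injective e) {f : G → β → γ}
    (hf : ∀ b, Injective (f · b)) (c : γ) :
    #{j | f (e j).1 (e j).2 = c} ≤ Fintype.card β := by
  refine card_le_card_of_injOn (fun j => (e j).2) (fun _ _ => mem_coe.2 (mem_univ _)) ?_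
  intro j hj j' hj' hr
  simp only [coe_filter, Set.mem_ofPred_eq, mem_univ, true_and] at hj hj' hr
  have hg : (e j).1 = (e j').1 := hf (e j).2 (by simp only [hj, hr ▸ hj'])
  exact he (Prod.ext hg hr)

theorem exists_balanced_labeling_general (a x n : ℕ) (ha : 1 < a)
    (h₂ : n ≤ a ^ (x + 1)) :
    ∃ L : Fin n → (Fin (x + 1) → Fin (a + 1)),
      Function.Injective L ∧
      ∀ (d : Fin (x + 1)) (c : Fin (a + 1)),
        (Finset.univ.filter (fun j : Fin n => L j d = c)).card ≤ ⌈(n : ℝ) / a⌉₊ := by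
  have : NeZero a := ⟨by omega⟩
  have ha₀ : (0 : ℝ) < a := by exact_mod_cast NeZero.pos a
  set q := ⌈(n : ℝ) / a⌉₊
  have hnq : n ≤ a * q := by
    have := Nat.le_ceil ((n : ℝ) / a)
    rw [div_le_iff₀ ha₀] at this
    exact_mod_cast this.trans_eq (mul_comm _ _)
  have hqx : q ≤ a ^ x := Nat.ceil_le.2 <| by
    rw [div_le_iff₀ ha₀]; exact_mod_cast (pow_succ a x).symm.le.trans' h₂
  let e : Fin n → Fin a × Fin q := fun j => finProdFinEquiv.symm (Fin.castLE hnq j)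
  have he : Injective e := finProdFinEquiv.symm.injective.comp (Fin.castLE_injective hnq)
  let digits : Fin q → Fin x → Fin a := fun r => finFunctionFinEquiv.symm (Fin.castLE hqx r)
  have hdigits : Injective digits :=
    finFunctionFinEquiv.symm.injective.comp (Fin.castLE_injective hqx)
  let word : Fin a → Fin q → Fin (x + 1) → Fin (a + 1) :=
    fun g r => Fin.castSucc ∘ shiftWord g (digits r)
  refine ⟨fun j => word (e j).1 (e j).2, fun j j' h => he ?_, fun d c => ?_⟩
  · obtain ⟨hg, hw⟩ := shiftWord_injective2 ((Fin.castSucc_injective a).comp_left h)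
    exact Prod.ext hg (hdigits hw)
  · simpa using card_filter_le_card_of_injective_fst he (f := fun g r => word g r d)
      (fun r => (Fin.castSucc_injective a).comp (shiftWord_left_injective (digits r) d)) c

/-- labeling procedure: for `a > 1` and `a^x < n ≤ a^{x+1}`, there is an
injective labeling of `[n]` by strings of length `x+1` over the alphabet `{0,…,a}` such
that in every position each letter is used at most `⌈n/a⌉` times. -/
theorem exists_balanced_labeling (a x n : ℕ) (ha : 1 < a)
    (h₁ : a ^ x < n) (h₂ : n ≤ a ^ (x + 1)) :
    ∃ L : Fin n → (Fin (x + 1) → Fin (a + 1)),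
      Function.Injective L ∧
      ∀ (d : Fin (x + 1)) (c : Fin (a + 1)),
        (Finset.univ.filter (fun j : Fin n => L j d = c)).card ≤ ⌈(n : ℝ) / a⌉₊ :=
  exists_balanced_labeling_general a x n ha h₂
end

section
/- Let G be a graph that is the disjoint union of ⌊n/⌊log n⌋⌋ cliques each of size ⌊log n⌋. Then the number of Markov-equivalent DAGs (acyclic orientations with the same skeleton and no new v-structures) is at least (⌊log n⌋!)^{⌊n/⌊log n⌋⌋}, and this quantity grows faster than n^k for every fixed k, i.e., for every k > 0, (⌊log n⌋!)^{⌊n/⌊log n⌋⌋} / n^k → ∞ as n → ∞. -/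
open SimpleGraph Filter

/-- The disjoint union of `q` cliques, each on `m` vertices: two vertices are adjacent
iff they lie in the same block and are distinct. -/
def cliqueBlocksGraph (q m : ℕ) : SimpleGraph (Fin q × Fin m) where
  Adj u v := u.1 = v.1 ∧ u ≠ v
  symm := by constructor; intro u v h; exact ⟨h.1.symm, h.2.symm⟩
  loopless := by constructor; intro u h; exact h.2 rfl

/-- `r` is a DAG orientation of `G` in the Markov equivalence class of `G`'s skeleton:
it orients exactly the edges of `G`, is acyclic, and creates no new v-structures. -/
def IsMECOrientation {V : Type*} (G : SimpleGraph V) (r : V → V → Prop) : Prop :=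
  (∀ u v, r u v → G.Adj u v) ∧
  (∀ u v, G.Adj u v → (r u v ↔ ¬ r v u)) ∧
  (∀ u, ¬ Relation.TransGen r u u) ∧
  (∀ u v w, r u w → r v w → u ≠ v → G.Adj u v)

-- the orientation induced by a family of permutations
def permRel {q m : ℕ} (σ : Fin q → Equiv.Perm (Fin m)) :
    (Fin q × Fin m) → (Fin q × Fin m) → Prop :=
  fun u v => u.1 = v.1 ∧ σ u.1 u.2 < σ v.1 v.2

lemma permRel_isMEC {q m : ℕ} (σ : Fin q → Equiv.Perm (Fin m)) :
    IsMECOrientation (cliqueBlocksGraph q m) (permRel σ) := by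
  refine ⟨?_, ?_, ?_, ?_⟩
  · rintro ⟨a, i⟩ ⟨b, j⟩ ⟨hab, hlt⟩
    subst hab
    refine ⟨rfl, fun h => ?_⟩
    rw [h] at hlt; exact lt_irrefl _ hlt
  · rintro ⟨a, i⟩ ⟨b, j⟩ ⟨hab, hne⟩
    subst hab
    have hij : i ≠ j := by simpa using hne
    have hs : σ a i ≠ σ a j := fun h => hij ((σ a).injective h)
    constructor
    · rintro ⟨-, hlt⟩ ⟨-, hlt'⟩
      exact lt_asymm hlt hlt'
    · intro h
      refine ⟨rfl, ?_⟩
      rcases lt_or_gt_of_ne hs with h1 | h1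
      · exact h1
      · exact absurd ⟨rfl, h1⟩ h
  · intro u hu
    have key : ∀ u v, Relation.TransGen (permRel σ) u v →
        u.1 = v.1 ∧ σ u.1 u.2 < σ v.1 v.2 := by
      intro u v h
      induction h with
      | single h => exact h
      | tail _ h ih =>
        exact ⟨ih.1.trans h.1, lt_trans ih.2 (ih.1 ▸ h.2)⟩
    exact lt_irrefl _ (key u u hu).2
  · rintro ⟨a, i⟩ ⟨b, j⟩ ⟨c, l⟩ ⟨h1, -⟩ ⟨h2, -⟩ hne
    exact ⟨h1.trans h2.symm, hne⟩

lemma permRel_injective {q m : ℕ} : Function.Injective (@permRel q m) := by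
  intro σ τ h
  funext a
  have key : ∀ i j : Fin m, σ a i < σ a j ↔ τ a i < τ a j := by
    intro i j
    constructor
    · intro hl
      have := congrFun (congrFun h (a, i)) (a, j)
      have h2 : permRel τ (a, i) (a, j) := this ▸ (⟨rfl, hl⟩ : permRel σ (a, i) (a, j))
      exact h2.2
    · intro hl
      have := congrFun (congrFun h (a, i)) (a, j)
      have h2 : permRel σ (a, i) (a, j) := this ▸ (⟨rfl, hl⟩ : permRel τ (a, i) (a, j))
      exact h2.2
  -- the comparison map is strictly monotone, hence id
  have hm : StrictMono (fun x : Fin m => τ a ((σ a).symm x)) := by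
    intro x y hxy
    have : σ a ((σ a).symm x) < σ a ((σ a).symm y) := by simpa using hxy
    exact (key _ _).1 this
  have hrange : Set.range (fun x : Fin m => τ a ((σ a).symm x)) = Set.range (id : Fin m → Fin m) := by
    ext x
    simp only [Set.range_id, Set.mem_univ, iff_true, Set.mem_range]
    exact ⟨σ a ((τ a).symm x), by simp⟩
  have hwf : WellFoundedLT (Fin m) := inferInstance
  have heq := (StrictMono.range_inj (β := Fin m) (γ := Fin m) hm (strictMono_id (α := Fin m))).1 hrange
  ext i
  have := congrFun heq (σ a i)
  simp only [Equiv.symm_apply_apply, id_eq] at this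
  exact congrArg Fin.val this.symm

lemma two_pow_pred_le_factorial : ∀ m : ℕ, 2 ^ (m - 1) ≤ m.factorial := by
  intro m
  induction m with
  | zero => simp
  | succ m ih =>
    cases m with
    | zero => simp
    | succ m =>
      have : (2:ℕ) ^ (m + 2 - 1) = 2 * 2 ^ (m + 1 - 1) := by
        simp [pow_succ]; ring
      rw [this, Nat.factorial_succ]
      exact Nat.mul_le_mul (by omega) ih

lemma four_mul_le_two_pow : ∀ m : ℕ, 4 ≤ m → 4 * m ≤ 2 ^ m := by
  intro m hm
  induction m with
  | zero => omega
  | succ m ih =>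
    rcases Nat.lt_or_ge m 4 with h | h
    · interval_cases m <;> simp_all <;> omega
    · have h4 : 4 ≤ 2 ^ m := le_trans (by norm_num) (Nat.pow_le_pow_right (by norm_num) h)
      have := ih (by omega)
      calc 4 * (m + 1) = 4 * m + 4 := by ring
        _ ≤ 2 ^ m + 2 ^ m := by omega
        _ = 2 ^ (m + 1) := by ring

-- key real inequality: for n ≥ 32, n/4 ≤ (log₂ n - 1) * (n / log₂ n)
lemma key_ineq (n : ℕ) (hn : 32 ≤ n) :
    (n : ℝ) / 4 ≤ (((Nat.log 2 n - 1) * (n / Nat.log 2 n) : ℕ) : ℝ) := by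
  set m := Nat.log 2 n with hm
  set q := n / m with hq
  have hn0 : n ≠ 0 := by omega
  have hm4 : 4 ≤ m := by
    rw [hm, Nat.le_log_iff_pow_le (by norm_num) hn0]; norm_num; omega
  have hmn : 4 * m ≤ n := by
    calc 4 * m ≤ 2 ^ m := four_mul_le_two_pow m hm4
      _ ≤ n := Nat.pow_log_le_self 2 hn0
  have hq4 : 4 * q ≤ n := by
    have h1 : q ≤ n / 4 := Nat.div_le_div_left hm4 (by norm_num)
    have := Nat.div_mul_le_self n 4
    omega
  have hmod := Nat.div_add_mod n m
  have hmodlt : n % m < m := Nat.mod_lt n (by omega)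
  -- m * q ≥ n - m  (as reals)
  have h1 : (n : ℝ) - m ≤ (m : ℝ) * q := by
    have : (m * q : ℕ) + (n % m : ℕ) = n := hmod
    have hc : ((m * q : ℕ) : ℝ) + ((n % m : ℕ) : ℝ) = (n : ℝ) := by exact_mod_cast this
    have hc2 : ((n % m : ℕ) : ℝ) ≤ (m : ℝ) := by exact_mod_cast hmodlt.le
    push_cast at hc ⊢
    linarith
  have hcast : (((m - 1) * q : ℕ) : ℝ) = ((m : ℝ) - 1) * q := by
    have : (m - 1 : ℕ) = m - 1 := rfl
    push_cast [Nat.cast_sub (by omega : 1 ≤ m)]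
    ring
  rw [hcast]
  have hmr : (m : ℝ) ≤ (n : ℝ) / 4 := by
    have : ((4 * m : ℕ) : ℝ) ≤ (n : ℝ) := by exact_mod_cast hmn
    push_cast at this; linarith
  have hqr : (q : ℝ) ≤ (n : ℝ) / 4 := by
    have : ((4 * q : ℕ) : ℝ) ≤ (n : ℝ) := by exact_mod_cast hq4
    push_cast at this; linarith
  have hq1 : (1 : ℝ) ≤ q := by
    have : 1 ≤ q := Nat.one_le_div_iff (by omega) |>.mpr (by omega)
    exact_mod_cast this
  nlinarith

/-- a disjoint union of `⌊n/⌊log n⌋⌋` cliques of size `⌊log n⌋` has at least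
`(⌊log n⌋!)^{⌊n/⌊log n⌋⌋}` Markov-equivalent DAGs, and this quantity is
super-polynomial in `n`. -/
theorem clique_blocks_mec_size_superpolynomial :
    (∀ n : ℕ, 2 ≤ n →
      Nat.factorial (Nat.log 2 n) ^ (n / Nat.log 2 n) ≤
        Nat.card {r : (Fin (n / Nat.log 2 n) × Fin (Nat.log 2 n) → Fin (n / Nat.log 2 n) × Fin (Nat.log 2 n) → Prop) //
          IsMECOrientation (cliqueBlocksGraph (n / Nat.log 2 n) (Nat.log 2 n)) r}) ∧
    (∀ k : ℝ, 0 < k →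
      Tendsto (fun n : ℕ =>
          (Nat.factorial (Nat.log 2 n) : ℝ) ^ (n / Nat.log 2 n) / (n : ℝ) ^ k)
        atTop atTop) := by
  constructor
  · intro n _
    set q := n / Nat.log 2 n
    set m := Nat.log 2 n
    have hinj : Function.Injective (fun σ : Fin q → Equiv.Perm (Fin m) =>
        (⟨permRel σ, permRel_isMEC σ⟩ :
          {r // IsMECOrientation (cliqueBlocksGraph q m) r})) := by
      intro σ τ h
      exact permRel_injective (congrArg Subtype.val h)
    calc m.factorial ^ q = Nat.card (Fin q → Equiv.Perm (Fin m)) := by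
          rw [Nat.card_fun]
          simp [Nat.card_eq_fintype_card, Fintype.card_perm, Fintype.card_fin]
      _ ≤ _ := Nat.card_le_card_of_injective _ hinj
  · intro k hk
    set c := Real.log 2 / 4 with hc
    have hc0 : 0 < c := by positivity
    have T1 : Tendsto (fun n : ℕ => Real.exp (c * n) / (c * n) ^ k) atTop atTop :=
      (tendsto_exp_div_rpow_atTop k).comp
        ((tendsto_natCast_atTop_atTop (R := ℝ)).const_mul_atTop hc0)
    have T2 : Tendsto (fun n : ℕ => c ^ k * (Real.exp (c * n) / (c * n) ^ k)) atTop atTop :=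
      T1.const_mul_atTop (Real.rpow_pos_of_pos hc0 k)
    have T3 : Tendsto (fun n : ℕ => Real.exp (c * n) / (n : ℝ) ^ k) atTop atTop := by
      apply T2.congr'
      filter_upwards [eventually_ge_atTop 1] with n hn
      have hn0 : (0:ℝ) < n := by exact_mod_cast hn
      rw [Real.mul_rpow hc0.le hn0.le]
      have hck : (0:ℝ) < c ^ k := Real.rpow_pos_of_pos hc0 k
      field_simp
    apply tendsto_atTop_mono' _ _ T3
    filter_upwards [eventually_ge_atTop 32] with n hn
    set m := Nat.log 2 n with hm
    set q := n / m with hq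
    have hn0 : (0:ℝ) < n := by exact_mod_cast (by omega : 0 < n)
    have hx : (n : ℝ) / 4 ≤ (((m - 1) * q : ℕ) : ℝ) := key_ineq n hn
    have hexp : Real.exp (c * n) ≤ ((m.factorial : ℝ)) ^ q := by
      have e1 : Real.exp (c * n) = (2:ℝ) ^ ((n:ℝ)/4) := by
        rw [Real.rpow_def_of_pos (by norm_num : (0:ℝ) < 2)]
        congr 1
        rw [hc]; ring
      have e2 : (2:ℝ) ^ ((n:ℝ)/4) ≤ (2:ℝ) ^ ((((m - 1) * q : ℕ)) : ℝ) :=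
        (Real.rpow_le_rpow_left_iff (by norm_num : (1:ℝ) < 2)).mpr hx
      have e3 : (2:ℝ) ^ ((((m - 1) * q : ℕ)) : ℝ) = ((2 ^ ((m-1)*q) : ℕ) : ℝ) := by
        rw [Real.rpow_natCast]; push_cast; ring
      have e4 : (2 : ℕ) ^ ((m-1)*q) ≤ m.factorial ^ q := by
        rw [pow_mul]
        exact Nat.pow_le_pow_left (two_pow_pred_le_factorial m) q
      have e4' : ((2 ^ ((m-1)*q) : ℕ) : ℝ) ≤ ((m.factorial : ℝ)) ^ q := by
        exact_mod_cast e4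
      rw [e1]
      exact e2.trans (e3 ▸ e4')
    have hnk : (0:ℝ) < (n:ℝ) ^ k := Real.rpow_pos_of_pos (by positivity) k
    gcongr
end
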